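/- arXiv:2212.02902 — 5 statements merged into one kernel-verified Lean document; each statement's English description precedes it below -/
import Mathlib

section
/- Let A be a commutative ring and f₁, …, fₙ ∈ A generate the unit ideal. Then the canonical map from A to the equalizer of the two maps ∏ᵢ A[1/fᵢ] ⇉ ∏_{i<j} A[1/(fᵢfⱼ)] (given componentwise by the canonical localization maps) is an isomorphism; i.e., A is the limit of the diagram of the A[1/fᵢ] over the A[1/(fᵢfⱼ)]. -/
/-- Cast between localizations away from equal elements. -/
def awayCast {A : Type*} [CommRing A] {x y : A} (h : x = y) :
    Localization.Away x → Localization.Away y := fun z => h ▸ z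

private lemma awayCast_eq {A : Type*} [CommRing A] {x y : A} (h : y = x)
    (u : Localization.Away x) (v : Localization.Away y)
    (hk : IsLocalization.Away.awayToAwayRight (S := Localization.Away x)
        (P := Localization.Away (x * y)) x y u =
      IsLocalization.Away.awayToAwayLeft (S := Localization.Away y)
        (P := Localization.Away (x * y)) y x v) :
    awayCast h v = u := by
  subst h
  have inst : IsLocalization.Away y (Localization.Away (y * y)) := by
    refine IsLocalization.Away.mk y ?_ ?_ ?_
    · have hu : IsUnit (algebraMap A (Localization.Away (y * y)) y *
          algebraMap A (Localization.Away (y * y)) y) := by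
        rw [← map_mul]; exact IsLocalization.Away.algebraMap_isUnit _
      exact isUnit_of_mul_isUnit_left hu
    · intro s
      obtain ⟨m, a, hn⟩ := IsLocalization.Away.surj (y * y) s
      exact ⟨2 * m, a, by rw [← map_pow, show y ^ (2 * m) = (y * y) ^ m by
        rw [pow_mul, pow_two], map_pow]; exact hn⟩
    · intro a b hab
      obtain ⟨m, hn⟩ := IsLocalization.Away.exists_of_eq (x := y * y) hab
      exact ⟨2 * m, by rw [show y ^ (2 * m) = (y * y) ^ m by rw [pow_mul, pow_two]]; exact hn⟩
  have hinj : Function.Injective (IsLocalization.Away.awayToAwayRight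
      (S := Localization.Away y) (P := Localization.Away (y * y)) y y) := by
    refine (IsLocalization.bijective (M := Submonoid.powers y) _ ?_).injective
    ext a
    simp [IsLocalization.Away.awayToAwayRight_eq]
  apply hinj
  exact hk.symm

private lemma awayCast_comp {A : Type*} [CommRing A] {x y a b : A} (hx : a = x) (hy : b = y)
    (u : Localization.Away a) (v : Localization.Away b)
    (hk : IsLocalization.Away.awayToAwayRight (S := Localization.Away a)
        (P := Localization.Away (a * b)) a b u =
      IsLocalization.Away.awayToAwayLeft (S := Localization.Away b)
        (P := Localization.Away (a * b)) b a v) :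
    IsLocalization.Away.awayToAwayRight (S := Localization.Away x)
        (P := Localization.Away (x * y)) x y (awayCast hx u) =
      IsLocalization.Away.awayToAwayLeft (S := Localization.Away y)
        (P := Localization.Away (x * y)) y x (awayCast hy v) := by
  subst hx; subst hy; exact hk

/-- If `f₁,…,fₙ` generate the unit ideal, then `A` is the equalizer of the two canonical
maps `∏ᵢ A[1/fᵢ] ⇉ ∏_{i<j} A[1/(fᵢfⱼ)]`: the canonical map to the product is injective,
and its range is exactly the set of families agreeing in each `A[1/(fᵢfⱼ)]`. -/
theorem away_cover_equalizer {A : Type*} [CommRing A] {n : ℕ} (f : Fin n → A)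
    (hf : Ideal.span (Set.range f) = ⊤) :
    Function.Injective
      (fun a : A => fun i => algebraMap A (Localization.Away (f i)) a) ∧
    Set.range (fun a : A => fun i => algebraMap A (Localization.Away (f i)) a) =
      { s : ∀ i, Localization.Away (f i) | ∀ i j : Fin n, i < j →
        IsLocalization.Away.awayToAwayRight (S := Localization.Away (f i))
            (P := Localization.Away (f i * f j)) (f i) (f j) (s i) =
          IsLocalization.Away.awayToAwayLeft (S := Localization.Away (f j))
            (P := Localization.Away (f i * f j)) (f j) (f i) (s j) } := by
  constructor
  · intro x y hxy
    apply Localization.algebraMap_injective_of_span_eq_top (Set.range f) hf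
    funext a
    obtain ⟨_, i, rfl⟩ := a
    exact congrFun hxy i
  · ext t
    simp only [Set.mem_range, Set.mem_setOf_eq]
    constructor
    · rintro ⟨a, rfl⟩ i j hij
      simp only
      rw [IsLocalization.Away.awayToAwayRight_eq, IsLocalization.Away.awayToAwayLeft_eq]
    · intro ht
      have key : ∀ i j, IsLocalization.Away.awayToAwayRight (S := Localization.Away (f i))
          (P := Localization.Away (f i * f j)) (f i) (f j) (t i) =
          IsLocalization.Away.awayToAwayLeft (S := Localization.Away (f j))
          (P := Localization.Away (f i * f j)) (f j) (f i) (t j) := by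
        intro i j
        rcases lt_trichotomy i j with h | rfl | h
        · exact ht i j h
        · rfl
        · have hk := ht j i h
          have hu : IsUnit (algebraMap A (Localization.Away (f i * f j)) (f j * f i)) := by
            rw [mul_comm]; exact IsLocalization.Away.algebraMap_isUnit _
          let e : Localization.Away (f j * f i) →+* Localization.Away (f i * f j) :=
            IsLocalization.Away.lift (f j * f i) hu
          have h1 : e.comp (IsLocalization.Away.awayToAwayRight (S := Localization.Away (f j))
              (P := Localization.Away (f j * f i)) (f j) (f i)) =
              IsLocalization.Away.awayToAwayLeft (S := Localization.Away (f j))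
              (P := Localization.Away (f i * f j)) (f j) (f i) := by
            apply IsLocalization.ringHom_ext (Submonoid.powers (f j))
            ext a
            simp [e, IsLocalization.Away.awayToAwayRight_eq,
              IsLocalization.Away.awayToAwayLeft_eq]
          have h2 : e.comp (IsLocalization.Away.awayToAwayLeft (S := Localization.Away (f i))
              (P := Localization.Away (f j * f i)) (f i) (f j)) =
              IsLocalization.Away.awayToAwayRight (S := Localization.Away (f i))
              (P := Localization.Away (f i * f j)) (f i) (f j) := by
            apply IsLocalization.ringHom_ext (Submonoid.powers (f i))
            ext a
            simp [e, IsLocalization.Away.awayToAwayRight_eq,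
              IsLocalization.Away.awayToAwayLeft_eq]
          rw [← DFunLike.congr_fun h2 (t i), RingHom.comp_apply, ← hk]
          exact DFunLike.congr_fun h1 (t j)
      obtain ⟨r, hr, -⟩ := Localization.existsUnique_algebraMap_eq_of_span_eq_top
        (Set.range f) hf (fun a => awayCast a.2.choose_spec (t a.2.choose))
        (fun a b => awayCast_comp a.2.choose_spec b.2.choose_spec _ _ (key _ _))
      refine ⟨r, funext fun i => ?_⟩
      have hmem : f i ∈ Set.range f := ⟨i, rfl⟩
      exact (hr ⟨f i, hmem⟩).trans
        (awayCast_eq hmem.choose_spec (t i) (t hmem.choose) (key i hmem.choose))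
end

section
/- Let A be a commutative ring and f₁, …, fₙ ∈ A generate the unit ideal. Given elements sᵢ ∈ A[1/fᵢ] such that sᵢ and sⱼ have equal images in A[1/(fᵢfⱼ)] for all i < j, there exists a ∈ A whose image in A[1/fᵢ] equals sᵢ for all i. -/
/-- Gluing: if `f₁,…,fₙ` generate the unit ideal and `sᵢ ∈ A[1/fᵢ]` agree in each
`A[1/(fᵢfⱼ)]` for `i < j`, then they come from a single element `a ∈ A`. -/
theorem exists_of_localization_away_compatible {A : Type*} [CommRing A] {n : ℕ}
    (f : Fin n → A) (hf : Ideal.span (Set.range f) = ⊤)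
    (s : ∀ i, Localization.Away (f i))
    (hs : ∀ i j : Fin n, i < j →
      IsLocalization.Away.awayToAwayRight (S := Localization.Away (f i))
          (P := Localization.Away (f i * f j)) (f i) (f j) (s i) =
        IsLocalization.Away.awayToAwayLeft (S := Localization.Away (f j))
          (P := Localization.Away (f i * f j)) (f j) (f i) (s j)) :
    ∃ a : A, ∀ i, algebraMap A (Localization.Away (f i)) a = s i := by
  classical
  choose m r eq using fun i ↦ IsLocalization.Away.surj (S := Localization.Away (f i)) (f i) (s i)
  -- uniform exponent
  let N : ℕ := Finset.univ.sup m
  set r' : Fin n → A := fun i ↦ f i ^ (N - m i) * r i with hr'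
  have eq' : ∀ i, s i * algebraMap A (Localization.Away (f i)) (f i ^ N) =
      algebraMap A (Localization.Away (f i)) (r' i) := by
    intro i
    rw [hr', map_mul, ← eq, mul_left_comm, ← map_pow, ← map_mul, ← pow_add,
      Nat.sub_add_cancel (Finset.le_sup (Finset.mem_univ i))]
  -- compatibility in A, with exponents, first for i < j
  have eq2 : ∀ i j : Fin n, i < j → ∃ N',
      (f i * f j) ^ N' * (r' i * f j ^ N) = (f i * f j) ^ N' * (r' j * f i ^ N) := by
    intro i j hij
    refine IsLocalization.Away.exists_of_eq (S := Localization.Away (f i * f j)) (f i * f j) ?_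
    simp_rw [map_mul,
      ← IsLocalization.Away.awayToAwayRight_eq (S := Localization.Away (f i))
        (P := Localization.Away (f i * f j)) (f i) (f j) (r' i),
      ← IsLocalization.Away.awayToAwayLeft_eq (S := Localization.Away (f j))
        (P := Localization.Away (f i * f j)) (f j) (f i) (r' j),
      ← eq', map_mul, IsLocalization.Away.awayToAwayRight_eq,
      IsLocalization.Away.awayToAwayLeft_eq, hs i j hij, mul_assoc, ← map_mul, mul_comm]
  -- all pairs
  have eq2' : ∀ i j : Fin n, ∃ N',
      (f i * f j) ^ N' * (r' i * f j ^ N) = (f i * f j) ^ N' * (r' j * f i ^ N) := by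
    intro i j
    rcases lt_trichotomy i j with h | h | h
    · exact eq2 i j h
    · exact ⟨0, by rw [h]⟩
    · obtain ⟨N', hN'⟩ := eq2 j i h
      exact ⟨N', by rw [mul_comm (f i)]; exact hN'.symm⟩
  choose N' hN' using eq2'
  let M : ℕ := Finset.univ.sup fun p : Fin n × Fin n ↦ N' p.1 p.2
  have eq3 : ∀ i j : Fin n,
      (f i * f j) ^ M * (r' i * f j ^ N) = (f i * f j) ^ M * (r' j * f i ^ N) := by
    intro i j
    have h1 : N' i j ≤ M := Finset.le_sup (f := fun p : Fin n × Fin n ↦ N' p.1 p.2)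
      (Finset.mem_univ (i, j))
    obtain ⟨d, hd⟩ := Nat.le.dest h1
    calc (f i * f j) ^ M * (r' i * f j ^ N)
        = (f i * f j) ^ d * ((f i * f j) ^ N' i j * (r' i * f j ^ N)) := by
          rw [← hd]; ring
      _ = (f i * f j) ^ d * ((f i * f j) ^ N' i j * (r' j * f i ^ N)) := by rw [hN']
      _ = (f i * f j) ^ M * (r' j * f i ^ N) := by rw [← hd]; ring
  -- absorb exponents
  set K : ℕ := M + N with hK
  set t : Fin n → A := fun i ↦ f i ^ M * r' i with ht
  have eq4 : ∀ i, s i * algebraMap A (Localization.Away (f i)) (f i ^ K) =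
      algebraMap A (Localization.Away (f i)) (t i) := by
    intro i
    rw [ht, map_mul, ← eq', mul_left_comm, ← map_mul, ← pow_add, hK]
  have eq5 : ∀ i j : Fin n, t i * f j ^ K = t j * f i ^ K := by
    intro i j
    rw [ht, hK]
    simp only [pow_add]
    linear_combination eq3 i j
  -- partition of unity
  have span_pow : Ideal.span (Set.range fun i ↦ f i ^ K) = ⊤ := by
    have h2 := Ideal.span_pow_eq_top _ hf K
    rwa [← Set.range_comp] at h2
  obtain ⟨c, eq1⟩ := (Submodule.mem_span_range_iff_exists_fun _).mp
    ((Ideal.eq_top_iff_one _).mp span_pow)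
  refine ⟨∑ j, c j * t j, fun i ↦ ?_⟩
  refine ((IsLocalization.Away.algebraMap_isUnit (S := Localization.Away (f i))
    (f i)).pow K).mul_left_inj.mp ?_
  rw [← map_pow, eq4 i, ← map_mul]
  congr 1
  calc (∑ j, c j * t j) * f i ^ K = ∑ j, c j * (t j * f i ^ K) := by
        rw [Finset.sum_mul]; simp [mul_assoc]
    _ = ∑ j, c j * (t i * f j ^ K) := by simp_rw [fun j ↦ eq5 j i]
    _ = t i * ∑ j, c j • f j ^ K := by
        rw [Finset.mul_sum]
        exact Finset.sum_congr rfl fun j _ ↦ by rw [smul_eq_mul]; ring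
    _ = t i := by rw [eq1, mul_one]
end

section
/- Universal property of the Zariski lattice: for any commutative ring R, any distributive lattice L, and any support d : R → L (i.e., d(1) = ⊤, d(0) = ⊥, d(fg) = d(f) ∧ d(g), d(f+g) ≤ d(f) ∨ d(g)), there is a unique lattice homomorphism φ : 𝓛_R → L with φ ∘ D = d; concretely φ(√(f₁,…,fₙ)) = d(f₁) ∨ … ∨ d(fₙ). -/
open Pointwise

/-- The Zariski lattice: radicals of finitely generated ideals of `R`. -/
def ZariskiLat (R : Type*) [CommRing R] :=
  { I : Ideal R // ∃ s : Finset R, I = (Ideal.span (s : Set R)).radical }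

variable {R : Type*} [CommRing R]

/-- Join: `√a ∨ √b = √(a + b)`. -/
noncomputable def ZariskiLat.sup (a b : ZariskiLat R) : ZariskiLat R :=
  ⟨(a.1 ⊔ b.1).radical, by
    classical
    obtain ⟨s, hs⟩ := a.2
    obtain ⟨t, ht⟩ := b.2
    exact ⟨s ∪ t, by
      rw [hs, ht, ← Ideal.radical_sup, Finset.coe_union, Ideal.span_union]⟩⟩

/-- Meet: `√a ∧ √b = √(a·b)`. -/
noncomputable def ZariskiLat.inf (a b : ZariskiLat R) : ZariskiLat R :=
  ⟨(a.1 * b.1).radical, by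
    classical
    obtain ⟨s, hs⟩ := a.2
    obtain ⟨t, ht⟩ := b.2
    exact ⟨s * t, by
      rw [hs, ht, Ideal.radical_mul, Finset.coe_mul, ← Ideal.span_mul_span',
        Ideal.radical_mul, Ideal.radical_idem, Ideal.radical_idem]⟩⟩

/-- Top: `√(1) = ⊤`. -/
def ZariskiLat.top (R : Type*) [CommRing R] : ZariskiLat R :=
  ⟨⊤, ⟨{1}, by simp [Ideal.span_singleton_one, Ideal.radical_top]⟩⟩

/-- Bottom: `√(0)`. -/
def ZariskiLat.bot (R : Type*) [CommRing R] : ZariskiLat R :=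
  ⟨(⊥ : Ideal R).radical, ⟨∅, by simp⟩⟩

/-- The basic open `D(f) = √(f)`. -/
def ZariskiLat.D (f : R) : ZariskiLat R :=
  ⟨(Ideal.span {f}).radical, ⟨{f}, by simp⟩⟩

/-- `φ : 𝓛_R → L` is a lattice homomorphism commuting with the supports. -/
def ZariskiLat.IsHomOver {L : Type*} [DistribLattice L] [BoundedOrder L]
    (d : R → L) (φ : ZariskiLat R → L) : Prop :=
  (∀ a b : ZariskiLat R, φ (ZariskiLat.sup a b) = φ a ⊔ φ b) ∧
  (∀ a b : ZariskiLat R, φ (ZariskiLat.inf a b) = φ a ⊓ φ b) ∧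
  φ (ZariskiLat.top R) = ⊤ ∧ φ (ZariskiLat.bot R) = ⊥ ∧
  ∀ f : R, φ (ZariskiLat.D f) = d f

/-!
For a support `d` and any `c : L`, the elements `f` with `d f ≤ c` form a radical ideal.
Hence `d f ≤ d g₁ ⊔ … ⊔ d gₘ` whenever `f ∈ √(g₁, …, gₘ)`, so `⋁ᵢ d fᵢ` depends only on
`√(f₁, …, fₙ)`. This map preserves joins because generating sets of a sum are unions, and meets
because `√(s) · √(t)` is generated by the products `s * t` and `L` is distributive. It is the only
homomorphism over `d`, since every element of `𝓛_R` is a finite join of basic opens `D f`.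
-/

namespace ZariskiLat

def ofFinset (s : Finset R) : ZariskiLat R :=
  ⟨(Ideal.span (s : Set R)).radical, ⟨s, rfl⟩⟩

theorem exists_eq_ofFinset (a : ZariskiLat R) : ∃ s, a = ofFinset s :=
  let ⟨s, hs⟩ := a.2
  ⟨s, Subtype.ext hs⟩

theorem sup_ofFinset [DecidableEq R] (s t : Finset R) :
    ZariskiLat.sup (ofFinset s) (ofFinset t) = ofFinset (s ∪ t) :=
  Subtype.ext <| by
    show ((Ideal.span (s : Set R)).radical ⊔ (Ideal.span (t : Set R)).radical).radical =
      (Ideal.span ((s ∪ t : Finset R) : Set R)).radical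
    rw [← Ideal.radical_sup, Finset.coe_union, Ideal.span_union]

theorem inf_ofFinset [DecidableEq R] (s t : Finset R) :
    ZariskiLat.inf (ofFinset s) (ofFinset t) = ofFinset (s * t) :=
  Subtype.ext <| by
    show ((Ideal.span (s : Set R)).radical * (Ideal.span (t : Set R)).radical).radical =
      (Ideal.span ((s * t : Finset R) : Set R)).radical
    rw [Ideal.radical_mul, Ideal.radical_idem, Ideal.radical_idem,
      ← Ideal.radical_mul, Ideal.span_mul_span', Finset.coe_mul]

theorem top_eq_ofFinset : top R = ofFinset {1} :=
  Subtype.ext <| by simp [top, ofFinset, Ideal.radical_top]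

theorem bot_eq_ofFinset : bot R = ofFinset ∅ :=
  Subtype.ext <| by simp [bot, ofFinset]

theorem D_eq_ofFinset (f : R) : D f = ofFinset {f} :=
  Subtype.ext <| by simp [D, ofFinset]

theorem ofFinset_insert [DecidableEq R] (f : R) (s : Finset R) :
    ofFinset (insert f s) = ZariskiLat.sup (D f) (ofFinset s) := by
  rw [D_eq_ofFinset, sup_ofFinset, Finset.insert_eq]

end ZariskiLat

section Support

variable {L : Type*}

theorem apply_le_apply_pow [SemilatticeInf L] {M : Type*} [Monoid M] {d : M → L}
    (hmul : ∀ f g : M, d (f * g) = d f ⊓ d g) (f : M) (n : ℕ) : d f ≤ d (f ^ n) := by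
  induction n with
  | zero =>
    calc d f = d (f * 1) := by rw [mul_one]
      _ ≤ d (f ^ 0) := by rw [hmul, pow_zero]; exact inf_le_right
  | succ n ih => rw [pow_succ, hmul]; exact le_inf ih le_rfl

variable [Lattice L] [OrderBot L] {d : R → L}

def supportIdeal (h0 : d 0 = ⊥) (hmul : ∀ f g : R, d (f * g) = d f ⊓ d g)
    (hadd : ∀ f g : R, d (f + g) ≤ d f ⊔ d g) (c : L) : Ideal R where
  carrier := {f | d f ≤ c}
  zero_mem' := by simp [h0]
  add_mem' hf hg := (hadd _ _).trans (sup_le hf hg)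
  smul_mem' r f hf := by
    show d (r * f) ≤ c
    rw [hmul]
    exact inf_le_of_right_le hf

theorem isRadical_supportIdeal (h0 : d 0 = ⊥) (hmul : ∀ f g : R, d (f * g) = d f ⊓ d g)
    (hadd : ∀ f g : R, d (f + g) ≤ d f ⊔ d g) (c : L) :
    (supportIdeal h0 hmul hadd c).IsRadical :=
  fun f ⟨n, hn⟩ => (apply_le_apply_pow hmul f n).trans hn

theorem finset_sup_le_of_radical_span_le (h0 : d 0 = ⊥)
    (hmul : ∀ f g : R, d (f * g) = d f ⊓ d g) (hadd : ∀ f g : R, d (f + g) ≤ d f ⊔ d g)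
    {s t : Finset R} (h : (Ideal.span (s : Set R)).radical ≤ (Ideal.span (t : Set R)).radical) :
    s.sup d ≤ t.sup d := by
  have hspan : Ideal.span (t : Set R) ≤ supportIdeal h0 hmul hadd (t.sup d) :=
    Ideal.span_le.2 fun _ hf => Finset.le_sup hf
  have hrad := ((isRadical_supportIdeal h0 hmul hadd _).radical_le_iff).2 hspan
  exact Finset.sup_le fun f hf => hrad (h (Ideal.le_radical (Ideal.subset_span hf)))

theorem finset_sup_eq_of_radical_span_eq (h0 : d 0 = ⊥)
    (hmul : ∀ f g : R, d (f * g) = d f ⊓ d g) (hadd : ∀ f g : R, d (f + g) ≤ d f ⊔ d g)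
    {s t : Finset R} (h : (Ideal.span (s : Set R)).radical = (Ideal.span (t : Set R)).radical) :
    s.sup d = t.sup d :=
  le_antisymm (finset_sup_le_of_radical_span_le h0 hmul hadd h.le)
    (finset_sup_le_of_radical_span_le h0 hmul hadd h.ge)

end Support

theorem Finset.sup_mul_of_map_mul_eq_inf {M L : Type*} [Mul M] [DecidableEq M] [DistribLattice L]
    [OrderBot L] {d : M → L} (hmul : ∀ f g : M, d (f * g) = d f ⊓ d g) (s t : Finset M) :
    (s * t).sup d = s.sup d ⊓ t.sup d := by
  rw [Finset.sup_inf_sup, Finset.mul_def, Finset.sup_image]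
  simp only [Function.comp_def, hmul]

namespace ZariskiLat

variable {L : Type*}

noncomputable def lift [SemilatticeSup L] [OrderBot L] (d : R → L) (a : ZariskiLat R) : L :=
  a.2.choose.sup d

theorem lift_ofFinset [Lattice L] [OrderBot L] {d : R → L} (h0 : d 0 = ⊥)
    (hmul : ∀ f g : R, d (f * g) = d f ⊓ d g) (hadd : ∀ f g : R, d (f + g) ≤ d f ⊔ d g)
    (s : Finset R) : lift d (ofFinset s) = s.sup d :=
  finset_sup_eq_of_radical_span_eq h0 hmul hadd (ofFinset s).2.choose_spec.symm

variable [DistribLattice L] [BoundedOrder L] {d : R → L}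

theorem isHomOver_lift (h1 : d 1 = ⊤) (h0 : d 0 = ⊥) (hmul : ∀ f g : R, d (f * g) = d f ⊓ d g)
    (hadd : ∀ f g : R, d (f + g) ≤ d f ⊔ d g) : IsHomOver d (lift d) := by
  classical
  have hlift := lift_ofFinset h0 hmul hadd
  refine ⟨fun a b => ?_, fun a b => ?_, ?_, ?_, fun f => ?_⟩
  · obtain ⟨s, rfl⟩ := exists_eq_ofFinset a
    obtain ⟨t, rfl⟩ := exists_eq_ofFinset b
    rw [sup_ofFinset, hlift, hlift, hlift, Finset.sup_union]
  · obtain ⟨s, rfl⟩ := exists_eq_ofFinset a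
    obtain ⟨t, rfl⟩ := exists_eq_ofFinset b
    rw [inf_ofFinset, hlift, hlift, hlift, Finset.sup_mul_of_map_mul_eq_inf hmul]
  · rw [top_eq_ofFinset, hlift, Finset.sup_singleton, h1]
  · rw [bot_eq_ofFinset, hlift, Finset.sup_empty]
  · rw [D_eq_ofFinset, hlift, Finset.sup_singleton]

theorem IsHomOver.apply_ofFinset {φ : ZariskiLat R → L} (hφ : IsHomOver d φ) (s : Finset R) :
    φ (ofFinset s) = s.sup d := by
  classical
  obtain ⟨hsup, -, -, hbot, hD⟩ := hφ
  induction s using Finset.induction_on with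
  | empty => rw [← bot_eq_ofFinset, hbot, Finset.sup_empty]
  | insert f s _ ih => rw [ofFinset_insert, hsup, hD, ih, Finset.sup_insert]

theorem IsHomOver.unique {φ ψ : ZariskiLat R → L} (hφ : IsHomOver d φ) (hψ : IsHomOver d ψ) :
    φ = ψ := by
  funext a
  obtain ⟨s, rfl⟩ := exists_eq_ofFinset a
  rw [hφ.apply_ofFinset, hψ.apply_ofFinset]

end ZariskiLat

/-- Universal property of the Zariski lattice: every support `d : R → L` factors
uniquely through `D : R → 𝓛_R` via a lattice homomorphism, which is concretely given
by `φ(√(f₁,…,fₙ)) = d(f₁) ∨ … ∨ d(fₙ)`. -/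
theorem zariskiLat_universal_property {L : Type*} [DistribLattice L] [BoundedOrder L]
    (d : R → L) (h1 : d 1 = ⊤) (h0 : d 0 = ⊥)
    (hmul : ∀ f g : R, d (f * g) = d f ⊓ d g)
    (hadd : ∀ f g : R, d (f + g) ≤ d f ⊔ d g) :
    (∃! φ : ZariskiLat R → L, ZariskiLat.IsHomOver d φ) ∧
    ∀ φ : ZariskiLat R → L, ZariskiLat.IsHomOver d φ →
      ∀ s : Finset R, φ ⟨(Ideal.span (s : Set R)).radical, ⟨s, rfl⟩⟩ = s.sup d := by
  have hlift := ZariskiLat.isHomOver_lift h1 h0 hmul hadd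
  exact ⟨⟨_, hlift, fun ψ hψ => hψ.unique hlift⟩, fun φ hφ => hφ.apply_ofFinset⟩
end

section
/- Let L be a distributive lattice and F a presheaf on L (a contravariant functor from L as a poset category to a category C). Then F is a sheaf (i.e., for every finite family x₁,…,xₙ ∈ L, F(⋁ᵢ xᵢ) is the limit of the diagram F(xᵢ) → F(xᵢ ∧ xⱼ) ← F(xⱼ) for i < j) if and only if F(⊥) is terminal in C and for all x, y ∈ L the square F(x ∨ y) → F(x), F(x ∨ y) → F(y), F(x) → F(x ∧ y), F(y) → F(x ∧ y) is a pullback. -/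
/-!
A cone over the `F`-image of the pairwise diagram of `x₁, …, xₙ` is a family of sections over
the `xᵢ` that agree on the meets `xᵢ ⊓ xⱼ`, so the sheaf condition says that such compatible
families glue uniquely over `⋁ᵢ xᵢ`. For `n = 0` this is terminality of `F ⊥`, for `x₁, x₂` it is
the pullback square. Conversely, induct on `n`: put `Y = x₂ ⊔ ⋯ ⊔ xₙ`. A compatible family
glues over `Y`; by distributivity `x₁ ⊓ Y = ⋁ᵢ (xᵢ ⊓ x₁)`, so uniqueness of gluing there shows
that this section and the one over `x₁` agree on `x₁ ⊓ Y`, and the pullback square for `x₁, Y`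
glues them over `x₁ ⊔ Y`.
-/

open CategoryTheory CategoryTheory.Limits

universe u

/-- The cocone in `L` over the pairwise diagram of a finite family `x : Fin n → L`,
with point the finite join `⋁ᵢ xᵢ`. -/
def finJoinCocone {L : Type u} [DistribLattice L] [OrderBot L] {n : ℕ}
    (x : Fin n → L) :
    Cocone (Pairwise.diagram (fun i : ULift.{u} (Fin n) => x i.down)) where
  pt := Finset.univ.sup x
  ι :=
    { app := fun p =>
        homOfLE
          (match p with
          | .single i => Finset.le_sup (f := x) (Finset.mem_univ i.down)
          | .pair i _ =>
              inf_le_left.trans (Finset.le_sup (f := x) (Finset.mem_univ i.down)))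
      naturality := fun _ _ _ => Subsingleton.elim _ _ }

namespace LatticePresheaf

open Opposite

variable {C : Type*} [Category C]

section Preorder

variable {L : Type*} [Preorder L] (F : Lᵒᵖ ⥤ C)

abbrev res {a b : L} (h : a ≤ b) : F.obj (op b) ⟶ F.obj (op a) :=
  F.map (homOfLE h).op

@[simp]
lemma res_comp_res {a b c : L} (hab : a ≤ b) (hbc : b ≤ c) :
    res F hbc ≫ res F hab = res F (hab.trans hbc) := by
  rw [← F.map_comp]
  rfl

end Preorder

section SemilatticeInf

variable {L : Type*} [SemilatticeInf L] (F : Lᵒᵖ ⥤ C) {ι : Type*} {U : ι → L}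

def IsCompatible {P : C} (f : ∀ i, P ⟶ F.obj (op (U i))) : Prop :=
  ∀ i j, f i ≫ res F (inf_le_left : U i ⊓ U j ≤ U i) = f j ≫ res F inf_le_right

variable {F}

lemma IsCompatible.res_eq {P : C} {f : ∀ i, P ⟶ F.obj (op (U i))} (hf : IsCompatible F f)
    {i j : ι} {V : L} (hi : V ≤ U i) (hj : V ≤ U j) :
    f i ≫ res F hi = f j ≫ res F hj := by
  have hV : V ≤ U i ⊓ U j := le_inf hi hj
  rw [← res_comp_res F hV inf_le_left, ← res_comp_res F hV inf_le_right, ← Category.assoc,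
    hf i j, Category.assoc]

lemma isCompatible_comp_res {X : L} (hU : ∀ i, U i ≤ X) {P : C} (g : P ⟶ F.obj (op X)) :
    IsCompatible F (fun i => g ≫ res F (hU i)) := fun i j => by
  simp only [Category.assoc, res_comp_res]

variable (F U)

def HasUniqueGluing (X : L) (hU : ∀ i, U i ≤ X) : Prop :=
  ∀ ⦃P : C⦄ (f : ∀ i, P ⟶ F.obj (op (U i))), IsCompatible F f →
    ∃! g : P ⟶ F.obj (op X), ∀ i, g ≫ res F (hU i) = f i

variable {F U}

lemma HasUniqueGluing.hom_ext {X : L} {hU : ∀ i, U i ≤ X} (h : HasUniqueGluing F U X hU)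
    {P : C} {g g' : P ⟶ F.obj (op X)} (hg : ∀ i, g ≫ res F (hU i) = g' ≫ res F (hU i)) :
    g = g' :=
  (h _ (isCompatible_comp_res hU g')).unique hg fun _ => rfl

lemma HasUniqueGluing.of_eq {X X' : L} {hU : ∀ i, U i ≤ X} (h : HasUniqueGluing F U X hU)
    (hX : X = X') : HasUniqueGluing F U X' (hX ▸ hU) := by
  subst hX
  exact h

lemma hasUniqueGluing_ulift_iff {X : L} {hU : ∀ i, U i ≤ X} :
    HasUniqueGluing F (fun i : ULift ι => U i.down) X (fun i => hU i.down) ↔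
      HasUniqueGluing F U X hU :=
  ⟨fun h _ f hf => by simpa only [ULift.forall] using h (fun i => f i.down) fun _ _ => hf _ _,
    fun h _ f hf => by simpa only [ULift.forall] using h (fun i => f ⟨i⟩) fun _ _ => hf _ _⟩

lemma hasUniqueGluing_iff_of_isEmpty [IsEmpty ι] {X : L} {hU : ∀ i, U i ≤ X} :
    HasUniqueGluing F U X hU ↔ Nonempty (IsTerminal (F.obj (op X))) := by
  refine ⟨fun h => ?_, fun ⟨hT⟩ P f _ => ⟨hT.from P, isEmptyElim, fun _ _ => hT.hom_ext _ _⟩⟩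
  choose g _ using fun P : C => (h (P := P) isEmptyElim isEmptyElim).exists
  exact ⟨IsTerminal.ofUniqueHom g fun P m => h.hom_ext isEmptyElim⟩

lemma isCompatible_pairwise_π_app (s : Cone ((Pairwise.diagram U).op ⋙ F)) :
    IsCompatible F fun i => s.π.app (op (.single i)) := fun i j =>
  (s.w (Quiver.Hom.op (Pairwise.Hom.left i j))).trans
    (s.w (Quiver.Hom.op (Pairwise.Hom.right i j))).symm

def coneOfIsCompatible {P : C} (f : ∀ i, P ⟶ F.obj (op (U i))) (hf : IsCompatible F f) :
    Cone ((Pairwise.diagram U).op ⋙ F) where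
  pt := P
  π :=
    { app
        | op (.single i) => f i
        | op (.pair i _) => f i ≫ res F inf_le_left
      naturality := by
        rintro ⟨o₁⟩ ⟨o₂⟩ ⟨m⟩
        change Pairwise.Hom o₂ o₁ at m
        cases m <;> refine (Category.id_comp _).trans ?_
        case id_single | id_pair =>
          exact (Category.comp_id _).symm.trans (congrArg _ (F.map_id _).symm)
        case left => rfl
        case right => exact hf _ _ }

lemma forall_comp_π_app_iff {s t : Cone ((Pairwise.diagram U).op ⋙ F)} (g : s.pt ⟶ t.pt) :
    (∀ o, g ≫ t.π.app o = s.π.app o) ↔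
      ∀ i, g ≫ t.π.app (op (.single i)) = s.π.app (op (.single i)) := by
  refine ⟨fun h i => h _, fun h => ?_⟩
  rintro ⟨i | ⟨i, j⟩⟩
  · exact h i
  · rw [← s.w (Quiver.Hom.op (Pairwise.Hom.left i j)),
      ← t.w (Quiver.Hom.op (Pairwise.Hom.left i j)), ← Category.assoc, h]

theorem nonempty_isLimit_mapCone_iff (c : Cocone (Pairwise.diagram U)) :
    Nonempty (IsLimit (F.mapCone c.op)) ↔
      HasUniqueGluing F U c.pt fun i => leOfHom (c.ι.app (.single i)) := by
  refine ⟨fun ⟨h⟩ P f hf => ?_, fun h => ⟨IsLimit.ofExistsUnique fun s => ?_⟩⟩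
  · exact (existsUnique_congr forall_comp_π_app_iff).1 (h.existsUnique (coneOfIsCompatible f hf))
  · exact (existsUnique_congr forall_comp_π_app_iff).2 (h _ (isCompatible_pairwise_π_app s))

end SemilatticeInf

section Lattice

variable {L : Type*} [Lattice L] {F : Lᵒᵖ ⥤ C}

theorem HasUniqueGluing.isPullback {a b : L} {hU : ∀ i, ![a, b] i ≤ a ⊔ b}
    (h : HasUniqueGluing F ![a, b] (a ⊔ b) hU) :
    IsPullback (res F (le_sup_left : a ≤ a ⊔ b)) (res F le_sup_right)
      (res F (inf_le_left : a ⊓ b ≤ a)) (res F inf_le_right) := by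
  have w : res F (le_sup_left : a ≤ a ⊔ b) ≫ res F (inf_le_left : a ⊓ b ≤ a) =
      res F le_sup_right ≫ res F inf_le_right := by
    simp only [res_comp_res]
  have glue (s : PullbackCone (res F (inf_le_left : a ⊓ b ≤ a)) (res F inf_le_right)) :=
    h (fun | 0 => s.fst | 1 => s.snd) (by
      intro i j
      fin_cases i <;> fin_cases j
      · rfl
      · exact s.condition
      · have hc := s.condition =≫ res F (inf_comm b a).le
        simp only [Category.assoc, res_comp_res] at hc
        exact hc.symm
      · rfl)
  refine .of_isLimit (PullbackCone.IsLimit.mk w (fun s => (glue s).exists.choose)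
    (fun s => (glue s).exists.choose_spec 0) (fun s => (glue s).exists.choose_spec 1)
    fun s g h₀ h₁ => (glue s).unique ?_ (glue s).exists.choose_spec)
  intro i
  fin_cases i
  exacts [h₀, h₁]

theorem HasUniqueGluing.cons {n : ℕ} {U : Fin (n + 1) → L} {Y : L}
    {hUY : ∀ i : Fin n, U i.succ ≤ Y} {hUW : ∀ i : Fin n, U i.succ ⊓ U 0 ≤ U 0 ⊓ Y}
    (hY : HasUniqueGluing F (fun i : Fin n => U i.succ) Y hUY)
    (hW : HasUniqueGluing F (fun i : Fin n => U i.succ ⊓ U 0) (U 0 ⊓ Y) hUW)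
    (hpb : IsPullback (res F (le_sup_left : U 0 ≤ U 0 ⊔ Y)) (res F le_sup_right)
      (res F (inf_le_left : U 0 ⊓ Y ≤ U 0)) (res F inf_le_right)) :
    HasUniqueGluing F U (U 0 ⊔ Y) (Fin.cases le_sup_left fun i => (hUY i).trans le_sup_right) := by
  intro P f hf
  obtain ⟨a, ha, -⟩ := hY (fun i => f i.succ) fun i j => hf _ _
  have hcomm : f 0 ≫ res F inf_le_left = a ≫ res F inf_le_right := hW.hom_ext fun i => by
    rw [Category.assoc, Category.assoc, res_comp_res, res_comp_res,
      ← res_comp_res F inf_le_left (hUY i), ← Category.assoc, ha]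
    exact hf.res_eq _ _
  refine ⟨hpb.lift (f 0) a hcomm, fun i => ?_, fun g hg => ?_⟩
  · cases i using Fin.cases with
    | zero => exact hpb.lift_fst _ _ _
    | succ i => rw [← res_comp_res F (hUY i) le_sup_right, ← Category.assoc, hpb.lift_snd, ha]
  · refine hpb.hom_ext ((hg 0).trans (hpb.lift_fst _ _ _).symm) (hY.hom_ext fun i => ?_)
    rw [hpb.lift_snd, ha, Category.assoc, res_comp_res]
    exact hg i.succ

end Lattice

theorem nonempty_isLimit_mapCone_finJoinCocone_iff {L : Type u} [DistribLattice L] [OrderBot L]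
    (F : Lᵒᵖ ⥤ C) {n : ℕ} (x : Fin n → L) :
    Nonempty (IsLimit (F.mapCone (finJoinCocone x).op)) ↔
      HasUniqueGluing F x (Finset.univ.sup x) fun i => Finset.le_sup (Finset.mem_univ i) :=
  (nonempty_isLimit_mapCone_iff _).trans hasUniqueGluing_ulift_iff

end LatticePresheaf

open LatticePresheaf

theorem lattice_sheaf_iff_terminal_and_pullback_general {L : Type u} [DistribLattice L]
    [OrderBot L] {C : Type*} [Category C] (F : Lᵒᵖ ⥤ C) :
    (∀ (n : ℕ) (x : Fin n → L),
        Nonempty (IsLimit (F.mapCone (finJoinCocone x).op))) ↔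
      Nonempty (IsTerminal (F.obj (Opposite.op (⊥ : L)))) ∧
        ∀ x y : L,
          IsPullback (F.map (homOfLE (le_sup_left : x ≤ x ⊔ y)).op)
            (F.map (homOfLE (le_sup_right : y ≤ x ⊔ y)).op)
            (F.map (homOfLE (inf_le_left : x ⊓ y ≤ x)).op)
            (F.map (homOfLE (inf_le_right : x ⊓ y ≤ y)).op) := by
  simp only [nonempty_isLimit_mapCone_finJoinCocone_iff]
  constructor
  · intro h
    refine ⟨?_, fun a b => ((h 2 ![a, b]).of_eq ?_).isPullback⟩
    · simpa using hasUniqueGluing_iff_of_isEmpty.1 (h 0 Fin.elim0)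
    · simp [Fin.univ_succ]
  · rintro ⟨hT, hpb⟩ n
    induction n with
    | zero => exact fun x => hasUniqueGluing_iff_of_isEmpty.2 (by simpa using hT)
    | succ n ih =>
      intro x
      have hW := (ih fun i => x i.succ ⊓ x 0).of_eq
        (by rw [← Finset.sup_inf_distrib_right, inf_comm])
      exact ((ih _).cons hW (hpb _ _)).of_eq (by simp [Fin.univ_succ, Function.comp_def])

/-- A presheaf `F` on a distributive lattice `L` (with bottom) is a sheaf (for every
finite family `x₁,…,xₙ`, `F(⋁ᵢ xᵢ)` is the limit of the diagram
`F(xᵢ) → F(xᵢ ∧ xⱼ) ← F(xⱼ)`) iff `F(⊥)` is terminal and for all `x, y` the square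
over `F(x ∨ y)`, `F(x)`, `F(y)`, `F(x ∧ y)` is a pullback. -/
theorem lattice_sheaf_iff_terminal_and_pullback {L : Type u} [DistribLattice L]
    [OrderBot L] {C : Type*} [Category C] [HasFiniteLimits C] (F : Lᵒᵖ ⥤ C) :
    (∀ (n : ℕ) (x : Fin n → L),
        Nonempty (IsLimit (F.mapCone (finJoinCocone x).op))) ↔
      Nonempty (IsTerminal (F.obj (Opposite.op (⊥ : L)))) ∧
        ∀ x y : L,
          IsPullback (F.map (homOfLE (le_sup_left : x ≤ x ⊔ y)).op)
            (F.map (homOfLE (le_sup_right : y ≤ x ⊔ y)).op)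
            (F.map (homOfLE (inf_le_left : x ⊓ y ≤ x)).op)
            (F.map (homOfLE (inf_le_right : x ⊓ y ≤ y)).op) :=
  lattice_sheaf_iff_terminal_and_pullback_general F
end

section
/- Let R be a commutative ring and f, g, h ∈ R with D(h) = D(f) ∨ D(g) in the Zariski lattice (equivalently √(h) = √(f, g)). Then the square R[1/h] → R[1/f], R[1/h] → R[1/g], R[1/f] → R[1/fg], R[1/g] → R[1/fg] (with all arrows the unique R-algebra homomorphisms) is a pullback in commutative rings. -/
/-!
The forgetful functor to types reflects pullbacks, so it suffices to show that
`R[1/h] → R[1/f] ×_{R[1/fg]} R[1/g]` is bijective. As `h` is a unit in `R[1/h]` and a power of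
`h` lies in `(f, g)`, the images of `f` and `g` (hence of all their powers) are coprime there.
A relation `p fᴺ + q gᴺ = 1` then shows that an element killed by powers of `f` and of `g` is
zero, and glues compatible fractions `a / fᴺ` and `b / gᴺ` (with `a gᴺ = b fᴺ` in `R`) to
`p a + q b`.
-/

universe u

open IsLocalization

section

variable {R S : Type*} [CommRing R] [CommRing S] [Algebra R S]

theorem isCoprime_algebraMap_of_mem_radical {f g h : R} (hh : IsUnit (algebraMap R S h))
    (hmem : h ∈ (Ideal.span {f, g} : Ideal R).radical) :
    IsCoprime (algebraMap R S f) (algebraMap R S g) := by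
  obtain ⟨n, hn⟩ := hmem
  obtain ⟨u, v, huv⟩ := Ideal.mem_span_pair.mp hn
  obtain ⟨w, hw⟩ := hh.pow n
  refine ⟨↑w⁻¹ * algebraMap R S u, ↑w⁻¹ * algebraMap R S v, ?_⟩
  calc ↑w⁻¹ * algebraMap R S u * algebraMap R S f + ↑w⁻¹ * algebraMap R S v * algebraMap R S g
      = ↑w⁻¹ * algebraMap R S (u * f + v * g) := by simp only [map_add, map_mul]; ring
    _ = ↑w⁻¹ * w := by rw [huv, map_pow, hw]
    _ = 1 := w.inv_mul

variable {T : Type*} [CommRing T] [Algebra R T]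

theorem IsLocalization.exists_mul_eq_zero_of_algHom_eq_zero (M N : Submonoid R)
    [IsLocalization M S] [IsLocalization N T] (φ : S →ₐ[R] T) {z : S} (hz : φ z = 0) :
    ∃ n : N, algebraMap R S n * z = 0 := by
  obtain ⟨⟨r, m⟩, hr⟩ := surj M z
  have hr0 : algebraMap R T r = 0 := by
    rw [← φ.commutes, ← hr, map_mul, hz, zero_mul]
  obtain ⟨n, hn⟩ := (map_eq_zero_iff N T r).mp hr0
  refine ⟨n, (map_units S m).mul_left_injective ?_⟩
  simp only [zero_mul, mul_assoc, hr, ← map_mul, hn, map_zero]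

theorem IsLocalization.eq_of_algHom_away_eq (M : Submonoid R) [IsLocalization M S]
    {f g : R} (hfg : IsCoprime (algebraMap R S f) (algebraMap R S g))
    {Tf Tg : Type*} [CommRing Tf] [CommRing Tg] [Algebra R Tf] [Algebra R Tg]
    [Away f Tf] [Away g Tg] (φf : S →ₐ[R] Tf) (φg : S →ₐ[R] Tg) {z w : S}
    (hf : φf z = φf w) (hg : φg z = φg w) : z = w := by
  rw [← sub_eq_zero]
  obtain ⟨⟨_, n, rfl⟩, hn⟩ := exists_mul_eq_zero_of_algHom_eq_zero M (.powers f) φf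
    (show φf (z - w) = 0 by rw [map_sub, hf, sub_self])
  obtain ⟨⟨_, m, rfl⟩, hm⟩ := exists_mul_eq_zero_of_algHom_eq_zero M (.powers g) φg
    (show φg (z - w) = 0 by rw [map_sub, hg, sub_self])
  obtain ⟨p, q, hpq⟩ := hfg.pow (m := n) (n := m)
  rw [map_pow] at hn hm
  calc z - w = (p * algebraMap R S f ^ n + q * algebraMap R S g ^ m) * (z - w) := by
        rw [hpq, one_mul]
    _ = 0 := by linear_combination p * hn + q * hm

theorem AlgHom.map_mul_add_mul_eq (φ : S →ₐ[R] T) {u v a b : R}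
    (hu : IsUnit (algebraMap R T u)) (hab : a * v = b * u) {p q : S}
    (hpq : p * algebraMap R S u + q * algebraMap R S v = 1) {x : T}
    (hx : x * algebraMap R T u = algebraMap R T a) :
    φ (p * algebraMap R S a + q * algebraMap R S b) = x := by
  have hab' : algebraMap R T a * algebraMap R T v = algebraMap R T b * algebraMap R T u := by
    simp only [← map_mul, hab]
  have hxv : x * algebraMap R T v = algebraMap R T b := hu.mul_left_injective <| by
    linear_combination algebraMap R T v * hx + hab'
  have h1 := congrArg φ hpq
  simp only [map_add, map_mul, φ.commutes, map_one] at h1 ⊢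
  linear_combination -φ p * hx - φ q * hxv + x * h1

variable {f g : R} {Tf Tg U : Type*} [CommRing Tf] [CommRing Tg] [CommRing U]
  [Algebra R Tf] [Algebra R Tg] [Algebra R U] [Away f Tf] [Away g Tg] [Away (f * g) U]

theorem IsLocalization.Away.exists_numerators_of_algHom_eq (ψf : Tf →ₐ[R] U)
    (ψg : Tg →ₐ[R] U) {x : Tf} {y : Tg} (hxy : ψf x = ψg y) :
    ∃ (N : ℕ) (a b : R), x * algebraMap R Tf (f ^ N) = algebraMap R Tf a ∧
      y * algebraMap R Tg (g ^ N) = algebraMap R Tg b ∧ a * g ^ N = b * f ^ N := by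
  obtain ⟨n₁, a, ha⟩ := Away.surj f x
  obtain ⟨n₂, b, hb⟩ := Away.surj g y
  have hU : algebraMap R U (a * f ^ n₂ * g ^ (n₁ + n₂)) =
      algebraMap R U (b * g ^ n₁ * f ^ (n₁ + n₂)) := by
    have ha' := congrArg ψf ha
    have hb' := congrArg ψg hb
    simp only [map_mul, map_pow, AlgHom.commutes] at ha' hb' ⊢
    rw [← ha', ← hb', hxy]
    ring
  obtain ⟨m, hm⟩ := Away.exists_of_eq (f * g) hU
  refine ⟨n₁ + n₂ + m, a * f ^ n₂ * f ^ m, b * g ^ n₁ * g ^ m, ?_, ?_, ?_⟩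
  · simp only [map_mul, map_pow] at ha ⊢
    rw [← ha]
    ring
  · simp only [map_mul, map_pow] at hb ⊢
    rw [← hb]
    ring
  · linear_combination hm

theorem IsLocalization.Away.exists_algHom_eq_of_isCoprime
    (hfg : IsCoprime (algebraMap R S f) (algebraMap R S g))
    (φf : S →ₐ[R] Tf) (φg : S →ₐ[R] Tg) (ψf : Tf →ₐ[R] U) (ψg : Tg →ₐ[R] U)
    {x : Tf} {y : Tg} (hxy : ψf x = ψg y) : ∃ z, φf z = x ∧ φg z = y := by
  obtain ⟨N, a, b, hx, hy, hab⟩ := exists_numerators_of_algHom_eq (f := f) (g := g) ψf ψg hxy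
  obtain ⟨p, q, hpq⟩ := hfg.pow (m := N) (n := N)
  simp only [← map_pow] at hpq
  refine ⟨p * algebraMap R S a + q * algebraMap R S b, ?_, ?_⟩
  · exact φf.map_mul_add_mul_eq (map_pow (algebraMap R Tf) f N ▸ (algebraMap_isUnit f).pow N)
      hab hpq hx
  · rw [add_comm]
    exact φg.map_mul_add_mul_eq (map_pow (algebraMap R Tg) g N ▸ (algebraMap_isUnit g).pow N)
      hab.symm (by rwa [add_comm]) hy

end

/-- If `D(h) = D(f) ∨ D(g)` in the Zariski lattice, i.e. `√(h) = √(f, g)`, then the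
square of (unique) `R`-algebra homomorphisms `R[1/h] → R[1/f], R[1/g] → R[1/fg]`
is a pullback square in the category of commutative rings. -/
theorem away_square_isPullback {R : Type u} [CommRing R] (f g h : R)
    (hcover : (Ideal.span {h} : Ideal R).radical =
      (Ideal.span {f, g} : Ideal R).radical)
    (φf : Localization.Away h →ₐ[R] Localization.Away f)
    (φg : Localization.Away h →ₐ[R] Localization.Away g)
    (ψf : Localization.Away f →ₐ[R] Localization.Away (f * g))
    (ψg : Localization.Away g →ₐ[R] Localization.Away (f * g)) :
    CategoryTheory.IsPullback
      (CommRingCat.ofHom φf.toRingHom) (CommRingCat.ofHom φg.toRingHom)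
      (CommRingCat.ofHom ψf.toRingHom) (CommRingCat.ofHom ψg.toRingHom) := by
  have hfg : IsCoprime (algebraMap R (Localization.Away h) f)
      (algebraMap R (Localization.Away h) g) :=
    isCoprime_algebraMap_of_mem_radical (Away.algebraMap_isUnit h)
      (hcover ▸ Ideal.le_radical (Ideal.mem_span_singleton_self h))
  refine CategoryTheory.IsPullback.of_map_of_faithful (CategoryTheory.forget CommRingCat) ?_
  rw [CategoryTheory.Limits.Types.isPullback_iff]
  refine ⟨?_, fun z w ⟨hzw_f, hzw_g⟩ => ?_, fun x y hxy => ?_⟩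
  · ext z
    exact congr($((algHom_subsingleton (.powers h)).elim (ψf.comp φf) (ψg.comp φg)) z)
  · exact eq_of_algHom_away_eq (.powers h) hfg φf φg hzw_f hzw_g
  · exact Away.exists_algHom_eq_of_isCoprime hfg φf φg ψf ψg hxy
end
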